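/- Let E be a complex Hilbert space, let H be a bounded selfadjoint operator on E with H² ≥ g²·1 for some g ≥ 0, and let X be a bounded operator on E with X*X ≥ m²·1 and XX* ≥ m²·1 for some m ≥ 0. Then the block operator L = [[−H, X*], [X, H]] on E ⊕ E is selfadjoint and satisfies L² ≥ (g² + m² − ‖HX − XH‖)·1. In particular, if ‖HX − XH‖ < g² + m², then L is invertible. -/

import Mathlib

open ContinuousLinearMap in
/-- The block operator `[[A, B], [C, D]]` on the Hilbert space direct sum `E ⊕ F`
(realized as `WithLp 2 (E × F)`), acting by `(x, y) ↦ (A x + B y, C x + D y)`. -/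
noncomputable def blockOp {E F : Type*} [NormedAddCommGroup E] [InnerProductSpace ℂ E]
    [NormedAddCommGroup F] [InnerProductSpace ℂ F]
    (A : E →L[ℂ] E) (B : F →L[ℂ] E) (C : E →L[ℂ] F) (D : F →L[ℂ] F) :
    WithLp 2 (E × F) →L[ℂ] WithLp 2 (E × F) :=
  ((WithLp.prodContinuousLinearEquiv 2 ℂ E F).symm.toContinuousLinearMap.comp
    ((A.comp (fst ℂ E F) + B.comp (snd ℂ E F)).prod
      (C.comp (fst ℂ E F) + D.comp (snd ℂ E F)))).comp
    (WithLp.prodContinuousLinearEquiv 2 ℂ E F).toContinuousLinearMap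

/-!
With `H` selfadjoint, the cross terms in `‖L (x, y)‖²` combine into the commutator:
`‖L (x, y)‖² = ‖H x‖² + ‖X x‖² + ‖H y‖² + ‖X* y‖² + 2 re ⟪(HX - XH) x, y⟫`.
The hypotheses bound the first four terms below by `(g² + m²) ‖(x, y)‖²`, and
`2 ‖K‖ ‖x‖ ‖y‖ ≤ ‖K‖ (‖x‖² + ‖y‖²)` bounds the last one below by `-‖K‖ ‖(x, y)‖²`, `K = HX - XH`.
As `L` is selfadjoint, `‖L v‖² = re ⟪L² v, v⟫`, which is the operator inequality. When the
constant is positive, `L²` dominates a strictly positive element of the C⋆-algebra of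
bounded operators, so it is invertible, and then so is `L`.
-/

open ContinuousLinearMap RCLike
open scoped InnerProductSpace

namespace ContinuousLinearMap

section General

variable {𝕜 E F : Type*} [RCLike 𝕜] [NormedAddCommGroup E] [InnerProductSpace 𝕜 E]
  [NormedAddCommGroup F] [InnerProductSpace 𝕜 F]

theorem neg_norm_mul_le_two_mul_re_inner_apply (K : E →L[𝕜] F) (x : E) (y : F) :
    -(‖K‖ * (‖x‖ ^ 2 + ‖y‖ ^ 2)) ≤ 2 * re ⟪K x, y⟫_𝕜 := by
  have hKxy : -(‖K‖ * ‖x‖ * ‖y‖) ≤ re ⟪K x, y⟫_𝕜 := by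
    have := (re_inner_le_norm (𝕜 := 𝕜) (-K x) y).trans
      (mul_le_mul_of_nonneg_right ((norm_neg (K x)).trans_le (K.le_opNorm x)) (norm_nonneg y))
    rwa [inner_neg_left, map_neg, neg_le] at this
  nlinarith [mul_nonneg (norm_nonneg K) (sq_nonneg (‖x‖ - ‖y‖))]

end General

variable {E : Type*} [NormedAddCommGroup E] [InnerProductSpace ℂ E] [CompleteSpace E]

theorem smul_one_le_adjoint_mul_self_iff (T : E →L[ℂ] E) (r : ℝ) :
    (r : ℂ) • (1 : E →L[ℂ] E) ≤ adjoint T * T ↔ ∀ x, r * ‖x‖ ^ 2 ≤ ‖T x‖ ^ 2 := by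
  have hsa : IsSelfAdjoint (adjoint T * T - (r : ℂ) • 1) := by
    refine (IsSelfAdjoint.star_mul_self T).sub ?_
    simp [IsSelfAdjoint, star_smul]
  rw [le_def, isPositive_def', and_iff_right hsa]
  refine forall_congr' fun x => ?_
  have hsmul : re ⟪((r : ℂ) • (1 : E →L[ℂ] E)) x, x⟫_ℂ = r * ‖x‖ ^ 2 := by
    simp [← Complex.ofReal_pow]
  rw [apply_norm_sq_eq_inner_adjoint_left, reApplyInnerSelf, sub_apply, inner_sub_left, map_sub,
    hsmul, sub_nonneg, mul_def]

open scoped ComplexOrder in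
theorem isUnit_of_smul_one_le_sq {T : E →L[ℂ] E} {c : ℝ} (hc : 0 < c) (h : (c : ℂ) • 1 ≤ T ^ 2) :
    IsUnit T :=
  (isUnit_pow_iff two_ne_zero).mp <|
    CStarAlgebra.isUnit_of_le _ h (.smul (by exact_mod_cast hc) isStrictlyPositive_one)

end ContinuousLinearMap

section BlockOp

variable {E F : Type*} [NormedAddCommGroup E] [InnerProductSpace ℂ E]
  [NormedAddCommGroup F] [InnerProductSpace ℂ F]

@[simp]
theorem blockOp_apply_fst (A : E →L[ℂ] E) (B : F →L[ℂ] E) (C : E →L[ℂ] F) (D : F →L[ℂ] F)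
    (v : WithLp 2 (E × F)) : (blockOp A B C D v).fst = A v.fst + B v.snd := rfl

@[simp]
theorem blockOp_apply_snd (A : E →L[ℂ] E) (B : F →L[ℂ] E) (C : E →L[ℂ] F) (D : F →L[ℂ] F)
    (v : WithLp 2 (E × F)) : (blockOp A B C D v).snd = C v.fst + D v.snd := rfl

variable [CompleteSpace E] [CompleteSpace F]

theorem adjoint_blockOp (A : E →L[ℂ] E) (B : F →L[ℂ] E) (C : E →L[ℂ] F) (D : F →L[ℂ] F) :
    adjoint (blockOp A B C D) = blockOp (adjoint A) (adjoint C) (adjoint B) (adjoint D) := by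
  refine ((eq_adjoint_iff _ _).mpr fun v w => ?_).symm
  simp only [WithLp.prod_inner_apply, WithLp.ofLp_fst, WithLp.ofLp_snd, blockOp_apply_fst,
    blockOp_apply_snd, inner_add_left, inner_add_right, adjoint_inner_left]
  ring

end BlockOp

section Localizer

variable {E : Type*} [NormedAddCommGroup E] [InnerProductSpace ℂ E] [CompleteSpace E]
  {H : E →L[ℂ] E} (X : E →L[ℂ] E)

theorem IsSelfAdjoint.blockOp_neg_adjoint (hH : IsSelfAdjoint H) :
    IsSelfAdjoint (blockOp (-H) (adjoint X) X H) := by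
  rw [isSelfAdjoint_iff', adjoint_blockOp, adjoint_adjoint, map_neg, hH.adjoint_eq]

theorem IsSelfAdjoint.norm_blockOp_neg_adjoint_apply_sq (hH : IsSelfAdjoint H)
    (v : WithLp 2 (E × E)) :
    ‖blockOp (-H) (adjoint X) X H v‖ ^ 2 = ‖H v.fst‖ ^ 2 + ‖X v.fst‖ ^ 2 + ‖H v.snd‖ ^ 2 +
      ‖adjoint X v.snd‖ ^ 2 + 2 * re ⟪(H * X - X * H) v.fst, v.snd⟫_ℂ := by
  have hcross : ⟪(H * X - X * H) v.fst, v.snd⟫_ℂ =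
      ⟪X v.fst, H v.snd⟫_ℂ - ⟪H v.fst, adjoint X v.snd⟫_ℂ := by
    rw [sub_apply, inner_sub_left, mul_apply_eq_comp, mul_apply_eq_comp, ← hH.adjoint_eq,
      adjoint_inner_left, hH.adjoint_eq, adjoint_inner_right]
  rw [WithLp.prod_norm_sq_eq_of_L2, blockOp_apply_fst, blockOp_apply_snd, neg_apply,
    @norm_add_sq ℂ, @norm_add_sq ℂ, hcross, map_sub, inner_neg_left, map_neg, norm_neg]
  ring

end Localizer

theorem localizer_master_gap_general {E : Type*} [NormedAddCommGroup E] [InnerProductSpace ℂ E]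
    [CompleteSpace E] (H X : E →L[ℂ] E) (hH : IsSelfAdjoint H)
    (g m : ℝ)
    (hH2 : ((g ^ 2 : ℝ) : ℂ) • (1 : E →L[ℂ] E) ≤ H ^ 2)
    (hX1 : ((m ^ 2 : ℝ) : ℂ) • (1 : E →L[ℂ] E) ≤ ContinuousLinearMap.adjoint X * X)
    (hX2 : ((m ^ 2 : ℝ) : ℂ) • (1 : E →L[ℂ] E) ≤ X * ContinuousLinearMap.adjoint X) :
    IsSelfAdjoint (blockOp (-H) (ContinuousLinearMap.adjoint X) X H) ∧
    ((g ^ 2 + m ^ 2 - ‖H * X - X * H‖ : ℝ) : ℂ) •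
        (1 : WithLp 2 (E × E) →L[ℂ] WithLp 2 (E × E)) ≤
      (blockOp (-H) (ContinuousLinearMap.adjoint X) X H) ^ 2 ∧
    (‖H * X - X * H‖ < g ^ 2 + m ^ 2 →
      IsUnit (blockOp (-H) (ContinuousLinearMap.adjoint X) X H)) := by
  set L := blockOp (-H) (adjoint X) X H
  have hL : IsSelfAdjoint L := hH.blockOp_neg_adjoint X
  have hHbd := (smul_one_le_adjoint_mul_self_iff H (g ^ 2)).mp (by rwa [hH.adjoint_eq, ← sq])
  have hXbd := (smul_one_le_adjoint_mul_self_iff X (m ^ 2)).mp hX1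
  have hXadjbd :=
    (smul_one_le_adjoint_mul_self_iff (adjoint X) (m ^ 2)).mp (by rwa [adjoint_adjoint])
  have hgap : ((g ^ 2 + m ^ 2 - ‖H * X - X * H‖ : ℝ) : ℂ) • 1 ≤ L ^ 2 := by
    rw [show L ^ 2 = adjoint L * L by rw [hL.adjoint_eq, sq]]
    refine (smul_one_le_adjoint_mul_self_iff L (g ^ 2 + m ^ 2 - ‖H * X - X * H‖)).mpr fun v => ?_
    rw [hH.norm_blockOp_neg_adjoint_apply_sq, WithLp.prod_norm_sq_eq_of_L2]
    linarith [hHbd v.fst, hHbd v.snd, hXbd v.fst, hXadjbd v.snd,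
      neg_norm_mul_le_two_mul_re_inner_apply (H * X - X * H) v.fst v.snd]
  exact ⟨hL, hgap, fun hlt => isUnit_of_smul_one_le_sq (sub_pos.mpr hlt) hgap⟩

/-- Master gap estimate: if `H² ≥ g²·1`, `X*X ≥ m²·1` and `XX* ≥ m²·1`, then the block
operator `L = [[−H, X*], [X, H]]` is selfadjoint, satisfies
`L² ≥ (g² + m² − ‖HX − XH‖)·1`, and is invertible when `‖HX − XH‖ < g² + m²`. -/
theorem localizer_master_gap {E : Type*} [NormedAddCommGroup E] [InnerProductSpace ℂ E]
    [CompleteSpace E] (H X : E →L[ℂ] E) (hH : IsSelfAdjoint H)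
    (g m : ℝ) (hg : 0 ≤ g) (hm : 0 ≤ m)
    (hH2 : ((g ^ 2 : ℝ) : ℂ) • (1 : E →L[ℂ] E) ≤ H ^ 2)
    (hX1 : ((m ^ 2 : ℝ) : ℂ) • (1 : E →L[ℂ] E) ≤ ContinuousLinearMap.adjoint X * X)
    (hX2 : ((m ^ 2 : ℝ) : ℂ) • (1 : E →L[ℂ] E) ≤ X * ContinuousLinearMap.adjoint X) :
    IsSelfAdjoint (blockOp (-H) (ContinuousLinearMap.adjoint X) X H) ∧
    ((g ^ 2 + m ^ 2 - ‖H * X - X * H‖ : ℝ) : ℂ) •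
        (1 : WithLp 2 (E × E) →L[ℂ] WithLp 2 (E × E)) ≤
      (blockOp (-H) (ContinuousLinearMap.adjoint X) X H) ^ 2 ∧
    (‖H * X - X * H‖ < g ^ 2 + m ^ 2 →
      IsUnit (blockOp (-H) (ContinuousLinearMap.adjoint X) X H)) :=
  localizer_master_gap_general H X hH g m hH2 hX1 hX2
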